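/- Let (X,d) be a complete metric space. Then the Wijsman hyperspace (2^X, T_{W(d)}) is a Baire space. -/

import Mathlib

/-- The Wijsman hyperspace of a metric space `X`: the collection `2^X` of all
nonempty closed subsets of `X`. -/
def WijsmanHyperspace (X : Type*) [MetricSpace X] : Type _ :=
  {A : Set X // A.Nonempty ∧ IsClosed A}

/-- The Wijsman topology `T_{W(d)}`: the topology induced from the product topology
on `X → ℝ` by the injection `A ↦ (x ↦ d(x, A))`, i.e. the weakest topology making
all distance functionals `A ↦ d(x, A)` continuous. -/
noncomputable instance wijsmanTopology (X : Type*) [MetricSpace X] :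
    TopologicalSpace (WijsmanHyperspace X) :=
  TopologicalSpace.induced (fun A (x : X) => Metric.infDist x A.1) Pi.topologicalSpace

/-!
Given dense open sets `Uₙ` and a nonempty open `W`, choose basic Wijsman neighbourhoods
`{B | |d(x, B) - d(x, Aₙ)| < c εₙ for x ∈ Fₙ}`, the one with `c = 6` inside `W ∩ Uₙ` and the
next `Aₙ₊₁` in the one with `c = 1`, with `εₙ` halving, the finite sets `Fₙ` growing, and each
`x ∈ Fₙ` having a near-nearest point of `Aₙ` inside `Fₙ`. Every point of `Fₘ ∩ Aₘ` can then be
moved by steps of size `O(εₙ)` through `Fₙ ∩ Aₙ`, `n ≥ m`; by completeness these chains converge.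
The closure of the set of all limits of sequences that eventually run through the `Aₙ` is the
required point of `W ∩ ⋂ Uₙ`: the limits reached from the near-nearest points give the upper
bounds on `d(x, ·)`, and the nesting gives the lower ones.
-/

open Metric Set Filter Topology

theorem exists_tendsto_of_forall_exists_dist_le {α : Type*} [PseudoMetricSpace α]
    [CompleteSpace α] {S : ℕ → Set α} {C : ℝ}
    (hS : ∀ k, ∀ p ∈ S k, ∃ q ∈ S (k + 1), dist p q ≤ C * (1 / 2) ^ k) {p : α} (hp : p ∈ S 0) :
    ∃ u : ℕ → α, (∀ k, u k ∈ S k) ∧ ∃ y, Tendsto u atTop (𝓝 y) ∧ dist p y ≤ 2 * C := by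
  choose! g hgS hg using hS
  let u : ℕ → α := fun k => Nat.rec p g k
  have hu : ∀ k, u k ∈ S k := by
    intro k
    induction k with
    | zero => exact hp
    | succ k ih => exact hgS k _ ih
  have hdist : ∀ k, dist (u k) (u (k + 1)) ≤ C * (1 / 2) ^ k := fun k => hg k _ (hu k)
  obtain ⟨y, hy⟩ :=
    cauchySeq_tendsto_of_complete (cauchySeq_of_le_geometric _ C (by norm_num) hdist)
  refine ⟨u, hu, y, hy, ?_⟩
  calc dist p y = dist (u 0) y := rfl
    _ ≤ C / (1 - 1 / 2) := dist_le_of_le_geometric_of_tendsto₀ _ C (by norm_num) hdist hy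
    _ = 2 * C := by ring

namespace WijsmanHyperspace

variable {X : Type*} [MetricSpace X]

theorem continuous_infDist (x : X) : Continuous fun A : WijsmanHyperspace X => infDist x A.1 :=
  (continuous_apply x).comp
    (continuous_induced_dom (f := fun (A : WijsmanHyperspace X) (y : X) => infDist y A.1))

def basicNbhd (F : Set X) (ε : ℝ) (A : WijsmanHyperspace X) : Set (WijsmanHyperspace X) :=
  {B | ∀ x ∈ F, |infDist x B.1 - infDist x A.1| < ε}

theorem mem_basicNbhd_self {F : Set X} {ε : ℝ} (hε : 0 < ε) (A : WijsmanHyperspace X) :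
    A ∈ basicNbhd F ε A := fun _ _ => by simpa using hε

theorem basicNbhd_mono {F F' : Set X} {ε ε' : ℝ} (hF : F ⊆ F') (hε : ε' ≤ ε)
    (A : WijsmanHyperspace X) : basicNbhd F' ε' A ⊆ basicNbhd F ε A :=
  fun _ hB x hx => (hB x (hF hx)).trans_le hε

theorem isOpen_basicNbhd {F : Set X} (hF : F.Finite) (ε : ℝ) (A : WijsmanHyperspace X) :
    IsOpen (basicNbhd F ε A) := by
  have : basicNbhd F ε A =
      ⋂ x ∈ F, (fun B : WijsmanHyperspace X => infDist x B.1) ⁻¹' ball (infDist x A.1) ε := by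
    ext B
    simp [basicNbhd, Real.dist_eq]
  rw [this]
  exact hF.isOpen_biInter fun x _ => isOpen_ball.preimage (continuous_infDist x)

theorem exists_basicNbhd_subset {G : Set (WijsmanHyperspace X)} (hG : IsOpen G)
    {A : WijsmanHyperspace X} (hA : A ∈ G) :
    ∃ F ε, F.Finite ∧ 0 < ε ∧ basicNbhd F ε A ⊆ G := by
  obtain ⟨t, ht, rfl⟩ := isOpen_induced_iff.1 hG
  obtain ⟨I, u, hu, hIu⟩ := isOpen_pi_iff.1 ht _ hA
  have hball : ∀ x ∈ I, ∀ᶠ ε in 𝓝[>] (0 : ℝ), ball (infDist x A.1) ε ⊆ u x := fun x hx => by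
    obtain ⟨δ, hδ, hδu⟩ := Metric.isOpen_iff.1 (hu x hx).1 _ (hu x hx).2
    exact mem_of_superset (Ioo_mem_nhdsGT hδ) fun ε hε => (ball_subset_ball hε.2.le).trans hδu
  obtain ⟨ε, hεu, hε⟩ := ((I.eventually_all.2 hball).and self_mem_nhdsWithin).exists
  exact ⟨I, ε, I.finite_toSet, hε, fun B hB => hIu fun x hx =>
    hεu x hx (by simpa [Real.dist_eq] using hB x hx)⟩

theorem exists_finite_superset_near (A : WijsmanHyperspace X) {T : Set X} (hT : T.Finite)
    {ε : ℝ} (hε : 0 < ε) :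
    ∃ F, T ⊆ F ∧ F.Finite ∧ ∀ x ∈ F, ∃ p ∈ F ∩ A.1, dist x p < infDist x A.1 + ε := by
  have hnear : ∀ x, ∃ p ∈ A.1, dist x p < infDist x A.1 + ε := fun x =>
    (infDist_lt_iff A.2.1).1 (lt_add_of_pos_right _ hε)
  choose w hwA hw using hnear
  refine ⟨T ∪ w '' T, subset_union_left, hT.union (hT.image w), ?_⟩
  rintro x (hx | ⟨y, hy, rfl⟩)
  · exact ⟨w x, ⟨Or.inr (mem_image_of_mem w hx), hwA x⟩, hw x⟩
  · refine ⟨w y, ⟨Or.inr (mem_image_of_mem w hy), hwA y⟩, ?_⟩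
    simpa using add_pos_of_nonneg_of_pos infDist_nonneg hε

structure WitnessedNbhd (X : Type*) [MetricSpace X] where
  center : WijsmanHyperspace X
  pts : Set X
  radius : ℝ
  finite_pts : pts.Finite
  nonempty_pts : pts.Nonempty
  radius_pos : 0 < radius
  exists_near : ∀ x ∈ pts, ∃ p ∈ pts ∩ center.1, dist x p < infDist x center.1 + radius

namespace WitnessedNbhd

def nbhd (N : WitnessedNbhd X) (c : ℝ) : Set (WijsmanHyperspace X) :=
  basicNbhd N.pts (c * N.radius) N.center

theorem isOpen_nbhd (N : WitnessedNbhd X) (c : ℝ) : IsOpen (N.nbhd c) :=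
  isOpen_basicNbhd N.finite_pts _ _

theorem center_mem_nbhd (N : WitnessedNbhd X) {c : ℝ} (hc : 0 < c) : N.center ∈ N.nbhd c :=
  mem_basicNbhd_self (mul_pos hc N.radius_pos) _

theorem nbhd_mono (N : WitnessedNbhd X) {c c' : ℝ} (h : c ≤ c') : N.nbhd c ⊆ N.nbhd c' :=
  basicNbhd_mono subset_rfl (mul_le_mul_of_nonneg_right h N.radius_pos.le) _

theorem exists_nbhd_subset {G : Set (WijsmanHyperspace X)} (hG : IsOpen G)
    {A : WijsmanHyperspace X} (hA : A ∈ G) {T : Set X} (hT : T.Finite) {η : ℝ} (hη : 0 < η) :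
    ∃ N : WitnessedNbhd X, T ⊆ N.pts ∧ N.radius ≤ η ∧ N.nbhd 6 ⊆ G := by
  obtain ⟨F, δ, hF, hδ, hFG⟩ := exists_basicNbhd_subset hG hA
  obtain ⟨a, ha⟩ := A.2.1
  have hε : 0 < min (δ / 6) η := lt_min (by positivity) hη
  obtain ⟨F', hF', hF'fin, hnear⟩ :=
    exists_finite_superset_near A ((hT.union hF).union (finite_singleton a)) hε
  refine ⟨⟨A, F', _, hF'fin, ⟨a, hF' (Or.inr rfl)⟩, hε, hnear⟩,
    fun x hx => hF' (Or.inl (Or.inl hx)), min_le_right _ _,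
    (basicNbhd_mono (fun x hx => hF' (Or.inl (Or.inr hx))) ?_ A).trans hFG⟩
  linarith [min_le_left (δ / 6) η]

/-- The limit construction lands within `5 * radius` of the center of each member of a
refining sequence, hence the scale `6`. -/
structure Refines (N M : WitnessedNbhd X) : Prop where
  pts_subset : N.pts ⊆ M.pts
  radius_le : M.radius ≤ N.radius / 2
  nbhd_subset : M.nbhd 6 ⊆ N.nbhd 1

theorem exists_refines (N : WitnessedNbhd X) {W D : Set (WijsmanHyperspace X)} (hW : IsOpen W)
    (hNW : N.center ∈ W) (hD : IsOpen D) (hDd : Dense D) :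
    ∃ M : WitnessedNbhd X, N.Refines M ∧ M.nbhd 6 ⊆ W ∩ D := by
  obtain ⟨A, ⟨hAN, hAW⟩, hAD⟩ := hDd.inter_open_nonempty _ ((N.isOpen_nbhd 1).inter hW)
    ⟨N.center, N.center_mem_nbhd one_pos, hNW⟩
  obtain ⟨M, hNM, hMr, hMG⟩ := exists_nbhd_subset ((hW.inter hD).inter (N.isOpen_nbhd 1))
    ⟨⟨hAW, hAD⟩, hAN⟩ N.finite_pts (half_pos N.radius_pos)
  exact ⟨M, ⟨hNM, hMr, hMG.trans inter_subset_right⟩, hMG.trans inter_subset_left⟩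

theorem Refines.exists_near {N M : WitnessedNbhd X} (h : N.Refines M) {p : X}
    (hp : p ∈ N.pts ∩ N.center.1) : ∃ q ∈ M.pts ∩ M.center.1, dist p q ≤ 2 * N.radius := by
  have hpM : infDist p M.center.1 < N.radius := by
    have := h.nbhd_subset (M.center_mem_nbhd (by norm_num)) p hp.1
    rw [infDist_zero_of_mem hp.2, one_mul] at this
    simpa using (le_abs_self _).trans_lt this
  obtain ⟨q, hq, hpq⟩ := M.exists_near p (h.pts_subset hp.1)
  exact ⟨q, hq, by linarith [h.radius_le, N.radius_pos]⟩

end WitnessedNbhd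

section Limit

open WitnessedNbhd

variable (N : ℕ → WitnessedNbhd X)

def limitSet : Set X :=
  {y | ∃ n, ∃ u : ℕ → X, (∀ k, u k ∈ (N (n + k)).center.1) ∧ Tendsto u atTop (𝓝 y)}

variable {N}

theorem antitone_nbhd_one (hN : ∀ n, (N n).Refines (N (n + 1))) :
    Antitone fun n => (N n).nbhd 1 :=
  antitone_nat_of_succ_le fun n => ((N (n + 1)).nbhd_mono (by norm_num)).trans (hN n).nbhd_subset

theorem radius_add_le (hN : ∀ n, (N n).Refines (N (n + 1))) (m k : ℕ) :
    (N (m + k)).radius ≤ (N m).radius * (1 / 2) ^ k := by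
  induction k with
  | zero => simp
  | succ k ih =>
    calc (N (m + k + 1)).radius ≤ (N (m + k)).radius / 2 := (hN (m + k)).radius_le
      _ ≤ (N m).radius * (1 / 2) ^ (k + 1) := by rw [pow_succ]; linarith

theorem sub_radius_le_dist_of_mem_limitSet (hN : ∀ n, (N n).Refines (N (n + 1))) {m : ℕ} {x y : X}
    (hx : x ∈ (N m).pts) (hy : y ∈ limitSet N) :
    infDist x (N m).center.1 - (N m).radius ≤ dist x y := by
  obtain ⟨n, u, hu, hlim⟩ := hy
  refine ge_of_tendsto (tendsto_const_nhds.dist hlim) (eventually_atTop.2 ⟨m, fun k hk => ?_⟩)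
  have hmem := antitone_nbhd_one hN (show m ≤ n + k by omega)
    ((N (n + k)).center_mem_nbhd one_pos) x hx
  rw [one_mul, abs_lt] at hmem
  linarith [infDist_le_dist_of_mem (x := x) (hu k)]

theorem exists_mem_limitSet_dist_lt [CompleteSpace X] (hN : ∀ n, (N n).Refines (N (n + 1)))
    {m : ℕ} {x : X} (hx : x ∈ (N m).pts) :
    ∃ y ∈ limitSet N, dist x y < infDist x (N m).center.1 + 5 * (N m).radius := by
  obtain ⟨p, hp, hxp⟩ := (N m).exists_near x hx
  have hstep : ∀ k, ∀ q ∈ (N (m + k)).pts ∩ (N (m + k)).center.1,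
      ∃ q' ∈ (N (m + (k + 1))).pts ∩ (N (m + (k + 1))).center.1,
        dist q q' ≤ 2 * (N m).radius * (1 / 2) ^ k := fun k q hq => by
    obtain ⟨q', hq', hqq'⟩ := (hN (m + k)).exists_near hq
    exact ⟨q', hq', by linarith [radius_add_le hN m k]⟩
  obtain ⟨u, hu, y, hlim, hpy⟩ := exists_tendsto_of_forall_exists_dist_le hstep hp
  refine ⟨y, ⟨m, u, fun k => (hu k).2, hlim⟩, ?_⟩
  linarith [dist_triangle x p y]

theorem exists_forall_mem_nbhd [CompleteSpace X] (hN : ∀ n, (N n).Refines (N (n + 1))) :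
    ∃ B, ∀ n, B ∈ (N n).nbhd 6 := by
  obtain ⟨x₀, hx₀⟩ := (N 0).nonempty_pts
  obtain ⟨y₀, hy₀, -⟩ := exists_mem_limitSet_dist_lt hN hx₀
  refine ⟨⟨closure (limitSet N), ⟨y₀, subset_closure hy₀⟩, isClosed_closure⟩, fun n x hx => ?_⟩
  have hlow : infDist x (N n).center.1 - (N n).radius ≤ infDist x (limitSet N) :=
    (le_infDist ⟨y₀, hy₀⟩).2 fun y hy => sub_radius_le_dist_of_mem_limitSet hN hx hy
  obtain ⟨y, hy, hxy⟩ := exists_mem_limitSet_dist_lt hN hx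
  have hup := infDist_le_dist_of_mem (x := x) hy
  change |infDist x (closure (limitSet N)) - _| < _
  rw [infDist_closure, abs_lt]
  constructor <;> linarith [(N n).radius_pos]

end Limit

end WijsmanHyperspace

open WijsmanHyperspace WitnessedNbhd

/-- Zsilinszky: the Wijsman hyperspace of a complete metric space is a Baire
space. -/
theorem stmt15 (X : Type*) [MetricSpace X] [CompleteSpace X] :
    BaireSpace (WijsmanHyperspace X) := by
  refine ⟨fun U hUo hUd => dense_iff_inter_open.2 fun W hW hWne => ?_⟩
  obtain ⟨A₀, hA₀W, hA₀U⟩ := (hUd 0).inter_open_nonempty W hW hWne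
  obtain ⟨N₀, -, -, hN₀⟩ :=
    exists_nbhd_subset (hW.inter (hUo 0)) ⟨hA₀W, hA₀U⟩ finite_empty one_pos
  have step : ∀ n (N : WitnessedNbhd X), N.nbhd 6 ⊆ W ∩ U n →
      ∃ M, N.Refines M ∧ M.nbhd 6 ⊆ W ∩ U (n + 1) := fun n N hN =>
    N.exists_refines hW (hN (N.center_mem_nbhd (by norm_num))).1 (hUo _) (hUd _)
  choose! next hnext using step
  let N : ℕ → WitnessedNbhd X := fun n => Nat.rec N₀ next n
  have hN : ∀ n, (N n).nbhd 6 ⊆ W ∩ U n := by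
    intro n
    induction n with
    | zero => exact hN₀
    | succ n ih => exact (hnext n _ ih).2
  obtain ⟨B, hB⟩ := exists_forall_mem_nbhd fun n => (hnext n _ (hN n)).1
  exact ⟨B, (hN 0 (hB 0)).1, mem_iInter.2 fun n => (hN n (hB n)).2⟩
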